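/- arXiv:1712.02017 — 5 statements merged into one kernel-verified Lean document; each statement's English description precedes it below -/
import Mathlib

section
/- Let f, b, d : ℤ → ℝ → ℝ → ℝ be smooth in (x,y). The operator identity [∂_y − T − f_n, ∂_x − b_n T^{-1} − d_n T^{-2}] = 0, where T is the shift operator (Tψ)_n = ψ_{n+1}, holds when applied to all sequences of smooth functions if and only if for all n, x, y: (i) ∂_x f_n − b_n + b_{n+1} = 0, (ii) d_n·(f_{n−2} − f_n) + ∂_y d_n = 0, and (iii) b_n·(f_{n−1} − f_n) + ∂_y b_n + d_n − d_{n+1} = 0. -/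
/-- The operator `A = ∂_y − T − f_n` acting on sequences of functions of `(x,y)`. -/
noncomputable def opA (f ψ : ℤ → ℝ → ℝ → ℝ) (n : ℤ) (x y : ℝ) : ℝ :=
  deriv (fun y' => ψ n x y') y - ψ (n + 1) x y - f n x y * ψ n x y

/-- The operator `B = ∂_x − b_n T^{-1} − d_n T^{-2}` acting on sequences of functions. -/
noncomputable def opB (b d ψ : ℤ → ℝ → ℝ → ℝ) (n : ℤ) (x y : ℝ) : ℝ :=
  deriv (fun x' => ψ n x' y) x - b n x y * ψ (n - 1) x y - d n x y * ψ (n - 2) x y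

lemma hdx (g : ℝ → ℝ → ℝ) (hg : ContDiff ℝ (⊤ : ℕ∞) (fun p : ℝ × ℝ => g p.1 p.2)) (x y : ℝ) :
    HasDerivAt (fun x' => g x' y) (fderiv ℝ (fun p : ℝ × ℝ => g p.1 p.2) (x, y) (1, 0)) x := by
  have h := (hg.differentiable (by simp) (x, y)).hasFDerivAt
  have h2 : HasDerivAt (fun x' : ℝ => (x', y)) ((1 : ℝ), (0 : ℝ)) x :=
    HasDerivAt.prodMk (hasDerivAt_id x) (hasDerivAt_const x y)
  exact h.comp_hasDerivAt x h2

lemma hdy (g : ℝ → ℝ → ℝ) (hg : ContDiff ℝ (⊤ : ℕ∞) (fun p : ℝ × ℝ => g p.1 p.2)) (x y : ℝ) :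
    HasDerivAt (fun y' => g x y') (fderiv ℝ (fun p : ℝ × ℝ => g p.1 p.2) (x, y) (0, 1)) y := by
  have h := (hg.differentiable (by simp) (x, y)).hasFDerivAt
  have h2 : HasDerivAt (fun y' : ℝ => (x, y')) ((0 : ℝ), (1 : ℝ)) y :=
    HasDerivAt.prodMk (hasDerivAt_const y x) (hasDerivAt_id y)
  exact h.comp_hasDerivAt y h2

lemma hdyx (g : ℝ → ℝ → ℝ) (hg : ContDiff ℝ (⊤ : ℕ∞) (fun p : ℝ × ℝ => g p.1 p.2)) (x y : ℝ) :
    HasDerivAt (fun y' => fderiv ℝ (fun p : ℝ × ℝ => g p.1 p.2) (x, y') (1, 0))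
      (fderiv ℝ (fderiv ℝ (fun p : ℝ × ℝ => g p.1 p.2)) (x, y) (0, 1) (1, 0)) y := by
  set F := fun p : ℝ × ℝ => g p.1 p.2 with hF
  have hF1 : ContDiff ℝ 1 (fderiv ℝ F) :=
    (hg.of_le (WithTop.coe_le_coe.mpr le_top) : ContDiff ℝ 2 F).fderiv_right (by norm_num)
  have h := (hF1.differentiable one_ne_zero (x, y)).hasFDerivAt
  have h2 : HasDerivAt (fun y' : ℝ => (x, y')) ((0 : ℝ), (1 : ℝ)) y :=
    HasDerivAt.prodMk (hasDerivAt_const y x) (hasDerivAt_id y)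
  have h3 : HasDerivAt (fun y' => fderiv ℝ F (x, y'))
      (fderiv ℝ (fderiv ℝ F) (x, y) (0, 1)) y := h.comp_hasDerivAt y h2
  simpa using h3.clm_apply (hasDerivAt_const y ((1 : ℝ), (0 : ℝ)))

lemma hdxy (g : ℝ → ℝ → ℝ) (hg : ContDiff ℝ (⊤ : ℕ∞) (fun p : ℝ × ℝ => g p.1 p.2)) (x y : ℝ) :
    HasDerivAt (fun x' => fderiv ℝ (fun p : ℝ × ℝ => g p.1 p.2) (x', y) (0, 1))
      (fderiv ℝ (fderiv ℝ (fun p : ℝ × ℝ => g p.1 p.2)) (x, y) (1, 0) (0, 1)) x := by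
  set F := fun p : ℝ × ℝ => g p.1 p.2 with hF
  have hF1 : ContDiff ℝ 1 (fderiv ℝ F) :=
    (hg.of_le (WithTop.coe_le_coe.mpr le_top) : ContDiff ℝ 2 F).fderiv_right (by norm_num)
  have h := (hF1.differentiable one_ne_zero (x, y)).hasFDerivAt
  have h2 : HasDerivAt (fun x' : ℝ => (x', y)) ((1 : ℝ), (0 : ℝ)) x :=
    HasDerivAt.prodMk (hasDerivAt_id x) (hasDerivAt_const x y)
  have h3 : HasDerivAt (fun x' => fderiv ℝ F (x', y))
      (fderiv ℝ (fderiv ℝ F) (x, y) (1, 0)) x := h.comp_hasDerivAt x h2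
  simpa using h3.clm_apply (hasDerivAt_const x ((0 : ℝ), (1 : ℝ)))

lemma symm2 (g : ℝ → ℝ → ℝ) (hg : ContDiff ℝ (⊤ : ℕ∞) (fun p : ℝ × ℝ => g p.1 p.2)) (x y : ℝ) :
    fderiv ℝ (fderiv ℝ (fun p : ℝ × ℝ => g p.1 p.2)) (x, y) (0, 1) (1, 0) =
    fderiv ℝ (fderiv ℝ (fun p : ℝ × ℝ => g p.1 p.2)) (x, y) (1, 0) (0, 1) :=
  (hg.contDiffAt.isSymmSndFDerivAt (by rw [minSmoothness_of_isRCLikeNormedField]; exact WithTop.coe_le_coe.mpr le_top)).eq _ _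

lemma key (f b d ψ : ℤ → ℝ → ℝ → ℝ)
    (hf : ∀ n, ContDiff ℝ (⊤ : ℕ∞) (fun p : ℝ × ℝ => f n p.1 p.2))
    (hb : ∀ n, ContDiff ℝ (⊤ : ℕ∞) (fun p : ℝ × ℝ => b n p.1 p.2))
    (hd : ∀ n, ContDiff ℝ (⊤ : ℕ∞) (fun p : ℝ × ℝ => d n p.1 p.2))
    (hψ : ∀ n, ContDiff ℝ (⊤ : ℕ∞) (fun p : ℝ × ℝ => ψ n p.1 p.2)) (n : ℤ) (x y : ℝ) :
    opA f (opB b d ψ) n x y - opB b d (opA f ψ) n x y =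
      (deriv (fun x' => f n x' y) x - b n x y + b (n + 1) x y) * ψ n x y
      - (b n x y * (f (n - 1) x y - f n x y) + deriv (fun y' => b n x y') y
          + d n x y - d (n + 1) x y) * ψ (n - 1) x y
      - (d n x y * (f (n - 2) x y - f n x y) + deriv (fun y' => d n x y') y)
          * ψ (n - 2) x y := by
  -- notation for partial derivatives
  set Dx : (ℝ → ℝ → ℝ) → ℝ := fun g => fderiv ℝ (fun p : ℝ × ℝ => g p.1 p.2) (x, y) (1, 0)
    with hDx
  set Dy : (ℝ → ℝ → ℝ) → ℝ := fun g => fderiv ℝ (fun p : ℝ × ℝ => g p.1 p.2) (x, y) (0, 1)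
    with hDy
  -- LHS first term: derivative in y of opB ψ at n
  have eB : (fun y' => opB b d ψ n x y') = fun y' =>
      fderiv ℝ (fun p : ℝ × ℝ => ψ n p.1 p.2) (x, y') (1, 0)
        - b n x y' * ψ (n - 1) x y' - d n x y' * ψ (n - 2) x y' := by
    funext y'
    unfold opB
    rw [(hdx (ψ n) (hψ n) x y').deriv]
  have hB : HasDerivAt (fun y' => opB b d ψ n x y')
      (fderiv ℝ (fderiv ℝ (fun p : ℝ × ℝ => ψ n p.1 p.2)) (x, y) (0, 1) (1, 0)
        - (Dy (b n) * ψ (n - 1) x y + b n x y * Dy (ψ (n - 1)))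
        - (Dy (d n) * ψ (n - 2) x y + d n x y * Dy (ψ (n - 2)))) y := by
    rw [eB]
    exact ((hdyx (ψ n) (hψ n) x y).sub
        ((hdy (b n) (hb n) x y).mul (hdy (ψ (n - 1)) (hψ (n - 1)) x y))).sub
        ((hdy (d n) (hd n) x y).mul (hdy (ψ (n - 2)) (hψ (n - 2)) x y))
  -- RHS first term: derivative in x of opA ψ at n
  have eA : (fun x' => opA f ψ n x' y) = fun x' =>
      fderiv ℝ (fun p : ℝ × ℝ => ψ n p.1 p.2) (x', y) (0, 1)
        - ψ (n + 1) x' y - f n x' y * ψ n x' y := by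
    funext x'
    unfold opA
    rw [(hdy (ψ n) (hψ n) x' y).deriv]
  have hA : HasDerivAt (fun x' => opA f ψ n x' y)
      (fderiv ℝ (fderiv ℝ (fun p : ℝ × ℝ => ψ n p.1 p.2)) (x, y) (1, 0) (0, 1)
        - Dx (ψ (n + 1))
        - (Dx (f n) * ψ n x y + f n x y * Dx (ψ n))) x := by
    rw [eA]
    exact (((hdxy (ψ n) (hψ n) x y).sub (hdx (ψ (n + 1)) (hψ (n + 1)) x y)).sub
        ((hdx (f n) (hf n) x y).mul (hdx (ψ n) (hψ n) x y)))
  -- expand both sides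
  show (deriv (fun y' => opB b d ψ n x y') y - opB b d ψ (n + 1) x y
      - f n x y * opB b d ψ n x y)
    - (deriv (fun x' => opA f ψ n x' y) x - b n x y * opA f ψ (n - 1) x y
      - d n x y * opA f ψ (n - 2) x y) = _
  rw [hB.deriv, hA.deriv]
  unfold opA opB
  rw [(hdx (ψ (n + 1)) (hψ (n + 1)) x y).deriv, (hdx (ψ n) (hψ n) x y).deriv]
  rw [(hdy (ψ (n - 1)) (hψ (n - 1)) x y).deriv, (hdy (ψ (n - 2)) (hψ (n - 2)) x y).deriv]
  rw [(hdx (f n) (hf n) x y).deriv, (hdy (b n) (hb n) x y).deriv, (hdy (d n) (hd n) x y).deriv]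
  rw [symm2 (ψ n) (hψ n) x y]
  have e1 : n + 1 - 1 = n := by ring
  have e2 : n + 1 - 2 = n - 1 := by ring
  have e3 : n - 1 + 1 = n := by ring
  have e4 : n - 2 + 1 = n - 1 := by ring
  rw [e1, e2, e3, e4]
  simp only [hDx, hDy]
  ring


/-- Delta sequence: `1` at index `m`, `0` elsewhere (as constant functions). -/
def delta (m k : ℤ) (_ _ : ℝ) : ℝ := if k = m then 1 else 0

lemma delta_smooth (m k : ℤ) : ContDiff ℝ (⊤ : ℕ∞) (fun p : ℝ × ℝ => delta m k p.1 p.2) :=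
  contDiff_const

/-- `[∂_y − T − f_n, ∂_x − b_n T^{-1} − d_n T^{-2}] = 0` on all smooth sequences iff
the chain equations (2)–(4) hold. -/
theorem stmt0 (f b d : ℤ → ℝ → ℝ → ℝ)
    (hf : ∀ n, ContDiff ℝ (⊤ : ℕ∞) (fun p : ℝ × ℝ => f n p.1 p.2))
    (hb : ∀ n, ContDiff ℝ (⊤ : ℕ∞) (fun p : ℝ × ℝ => b n p.1 p.2))
    (hd : ∀ n, ContDiff ℝ (⊤ : ℕ∞) (fun p : ℝ × ℝ => d n p.1 p.2)) :
    (∀ ψ : ℤ → ℝ → ℝ → ℝ, (∀ n, ContDiff ℝ (⊤ : ℕ∞) (fun p : ℝ × ℝ => ψ n p.1 p.2)) →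
      ∀ n x y, opA f (opB b d ψ) n x y = opB b d (opA f ψ) n x y) ↔
    (∀ (n : ℤ) (x y : ℝ),
      deriv (fun x' => f n x' y) x - b n x y + b (n + 1) x y = 0 ∧
      d n x y * (f (n - 2) x y - f n x y) + deriv (fun y' => d n x y') y = 0 ∧
      b n x y * (f (n - 1) x y - f n x y) + deriv (fun y' => b n x y') y
        + d n x y - d (n + 1) x y = 0) := by
  constructor
  · intro H n x y
    have hne1 : ¬(n - 1 = n) := by omega
    have hne2 : ¬(n - 2 = n) := by omega
    refine ⟨?_, ?_, ?_⟩
    · have hk := key f b d (delta n) hf hb hd (delta_smooth n) n x y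
      rw [sub_eq_zero_of_eq (H (delta n) (delta_smooth n) n x y)] at hk
      simp [delta, hne1, hne2] at hk
      linarith
    · have hne3 : ¬(n - 1 = n - 2) := by omega
      have hne4 : ¬(n = n - 2) := by omega
      have hk := key f b d (delta (n - 2)) hf hb hd (delta_smooth (n - 2)) n x y
      rw [sub_eq_zero_of_eq (H (delta (n - 2)) (delta_smooth (n - 2)) n x y)] at hk
      simp [delta, hne3, hne4] at hk
      linarith
    · have hne5 : ¬(n = n - 1) := by omega
      have hne6 : ¬(n - 2 = n - 1) := by omega
      have hk := key f b d (delta (n - 1)) hf hb hd (delta_smooth (n - 1)) n x y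
      rw [sub_eq_zero_of_eq (H (delta (n - 1)) (delta_smooth (n - 1)) n x y)] at hk
      simp [delta, hne5, hne6] at hk
      linarith
  · intro H ψ hψ n x y
    have hk := key f b d ψ hf hb hd hψ n x y
    obtain ⟨h1, h2, h3⟩ := H n x y
    rw [h1, h2, h3] at hk
    simp only [zero_mul, sub_zero] at hk
    linarith
end

section
/- Let F₁(z) = z³ + c₂z² + c₁z + c₀ and let γ : ℤ → ℝ → ℝ be smooth with γ_n(x), γ_{n−1}(x), γ_{n+1}(x) pairwise distinct for all n, x. Define V_n = F₁(γ_n)/((γ_n − γ_{n−1})(γ_n − γ_{n+1})) and W_n = −c₂ − γ_n − γ_{n+1}. Then the polynomial Q_n(z) = z − γ_n satisfies the identity F₁(z) = Q_{n−1}Q_{n+1}V_n + Q_n Q_{n+2}V_{n+1} + Q_n Q_{n+1}(z − V_n − V_{n+1} − W_n) for all z. -/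
/-- For `Q_n(z) = z − γ_n`, the identity (15) holds at `g = 1` with the explicit `V_n, W_n`. -/
theorem stmt2 (c0 c1 c2 : ℝ) (γ : ℤ → ℝ → ℝ) (hγ : ∀ n, ContDiff ℝ (⊤ : ℕ∞) (γ n))
    (hdist : ∀ (n : ℤ) (x : ℝ),
      γ (n - 1) x ≠ γ n x ∧ γ n x ≠ γ (n + 1) x ∧ γ (n - 1) x ≠ γ (n + 1) x) :
    ∀ (n : ℤ) (x z : ℝ),
      (fun t : ℝ => t ^ 3 + c2 * t ^ 2 + c1 * t + c0) z =
        (z - γ (n - 1) x) * (z - γ (n + 1) x) *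
          ((γ n x ^ 3 + c2 * γ n x ^ 2 + c1 * γ n x + c0) /
            ((γ n x - γ (n - 1) x) * (γ n x - γ (n + 1) x)))
        + (z - γ n x) * (z - γ (n + 2) x) *
          ((γ (n + 1) x ^ 3 + c2 * γ (n + 1) x ^ 2 + c1 * γ (n + 1) x + c0) /
            ((γ (n + 1) x - γ n x) * (γ (n + 1) x - γ (n + 2) x)))
        + (z - γ n x) * (z - γ (n + 1) x) *
          (z - (γ n x ^ 3 + c2 * γ n x ^ 2 + c1 * γ n x + c0) /
                ((γ n x - γ (n - 1) x) * (γ n x - γ (n + 1) x))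
             - (γ (n + 1) x ^ 3 + c2 * γ (n + 1) x ^ 2 + c1 * γ (n + 1) x + c0) /
                ((γ (n + 1) x - γ n x) * (γ (n + 1) x - γ (n + 2) x))
             - (-c2 - γ n x - γ (n + 1) x)) := by
  intro n x z
  obtain ⟨h1, h2, -⟩ := hdist n x
  obtain ⟨-, h3, -⟩ := hdist (n + 1) x
  have hd : γ (n + 1) x ≠ γ (n + 2) x := by
    have : n + 1 + 1 = n + 2 := by ring
    rwa [this] at h3
  have hba : γ n x - γ (n - 1) x ≠ 0 := sub_ne_zero.mpr h1.symm
  have hbc : γ n x - γ (n + 1) x ≠ 0 := sub_ne_zero.mpr h2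
  have hcb : γ (n + 1) x - γ n x ≠ 0 := sub_ne_zero.mpr h2.symm
  have hcd : γ (n + 1) x - γ (n + 2) x ≠ 0 := sub_ne_zero.mpr hd
  simp only []
  field_simp
  ring
end

section
/- Let F₁(z) = z³ + c₂z² + c₁z + c₀ and let γ_n(x) be smooth with γ_{n−1}, γ_n, γ_{n+1} pairwise distinct, satisfying the DKN equation γ_n' = F₁(γ_n)(γ_{n−1} − γ_{n+1})/((γ_{n−1} − γ_n)(γ_n − γ_{n+1})). Define V_n = F₁(γ_n)/((γ_n − γ_{n−1})(γ_n − γ_{n+1})) and W_n = −c₂ − γ_n − γ_{n+1}. Then ∂_x V_n = V_n(W_{n−1} − W_n + V_{n−1} − V_{n+1}) for all n. -/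
set_option maxHeartbeats 4000000 in
/-- DKN implies the first equation (12) of the system under the rank-two elliptic reduction. -/
theorem stmt4 (c0 c1 c2 : ℝ) (γ : ℤ → ℝ → ℝ)
    (hsm : ∀ n, ContDiff ℝ (⊤ : ℕ∞) (γ n))
    (hdist : ∀ (n : ℤ) (x : ℝ),
      γ (n - 1) x ≠ γ n x ∧ γ n x ≠ γ (n + 1) x ∧ γ (n - 1) x ≠ γ (n + 1) x)
    (F : ℝ → ℝ) (hF : F = fun t => t ^ 3 + c2 * t ^ 2 + c1 * t + c0)
    (hdkn : ∀ (n : ℤ) (x : ℝ), deriv (γ n) x =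
      F (γ n x) * (γ (n - 1) x - γ (n + 1) x) /
        ((γ (n - 1) x - γ n x) * (γ n x - γ (n + 1) x))) :
    ∀ (n : ℤ) (x : ℝ),
      deriv (fun x' => F (γ n x') / ((γ n x' - γ (n - 1) x') * (γ n x' - γ (n + 1) x'))) x
        = (F (γ n x) / ((γ n x - γ (n - 1) x) * (γ n x - γ (n + 1) x))) *
          ((-c2 - γ (n - 1) x - γ n x) - (-c2 - γ n x - γ (n + 1) x)
            + F (γ (n - 1) x) / ((γ (n - 1) x - γ (n - 2) x) * (γ (n - 1) x - γ n x))
            - F (γ (n + 1) x) / ((γ (n + 1) x - γ n x) * (γ (n + 1) x - γ (n + 2) x))) := by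
  intro n x
  have hd : ∀ m : ℤ, HasDerivAt (γ m) (deriv (γ m) x) x := fun m =>
    (((hsm m).differentiable (by simp)) x).hasDerivAt
  obtain ⟨hab, hbc, hac⟩ := hdist n x
  have e1 : n - 1 - 1 = n - 2 := by ring
  have e2 : n - 1 + 1 = n := by ring
  have e3 : n + 1 - 1 = n := by ring
  have e4 : n + 1 + 1 = n + 2 := by ring
  obtain ⟨hpa, hab', hpb⟩ := hdist (n - 1) x
  simp only [e1, e2] at hpa hab' hpb
  obtain ⟨hbc', hcq, hbq⟩ := hdist (n + 1) x
  simp only [e3, e4] at hbc' hcq hbq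
  set p := γ (n - 2) x with hp
  set a := γ (n - 1) x with ha
  set b := γ n x with hb
  set c := γ (n + 1) x with hc
  set q := γ (n + 2) x with hq
  set a' := deriv (γ (n - 1)) x with ha'
  set b' := deriv (γ n) x with hb'
  set c' := deriv (γ (n + 1)) x with hc'
  -- nonzero facts
  have h1 : a - b ≠ 0 := sub_ne_zero.mpr hab
  have h2 : b - c ≠ 0 := sub_ne_zero.mpr hbc
  have h3 : p - a ≠ 0 := sub_ne_zero.mpr hpa
  have h4 : c - q ≠ 0 := sub_ne_zero.mpr hcq
  have h1' : b - a ≠ 0 := sub_ne_zero.mpr (Ne.symm hab)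
  have hD : (b - a) * (b - c) ≠ 0 := mul_ne_zero h1' h2
  -- derivative of numerator
  have hN : HasDerivAt (fun x' => F (γ n x'))
      ((3 * b ^ 2 + c2 * (2 * b) + c1) * b') x := by
    rw [hF]
    have hgn := hd n
    have : HasDerivAt (fun x' => (γ n x') ^ 3 + c2 * (γ n x') ^ 2 + c1 * (γ n x') + c0)
        (((3 : ℕ) * (γ n x) ^ (3 - 1) * b' + c2 * ((2 : ℕ) * (γ n x) ^ (2 - 1) * b'))
          + c1 * b' + 0) x := by
      exact (((hgn.pow 3).add ((hgn.pow 2).const_mul c2)).add (hgn.const_mul c1)).add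
        (hasDerivAt_const x c0)
    convert this using 1
    push_cast
    ring
  -- derivative of denominator
  have hDen : HasDerivAt (fun x' => (γ n x' - γ (n - 1) x') * (γ n x' - γ (n + 1) x'))
      ((b' - a') * (b - c) + (b - a) * (b' - c')) x :=
    ((hd n).sub (hd (n - 1))).mul ((hd n).sub (hd (n + 1)))
  have hQ : HasDerivAt (fun x' => F (γ n x') / ((γ n x' - γ (n - 1) x') * (γ n x' - γ (n + 1) x')))
      (((3 * b ^ 2 + c2 * (2 * b) + c1) * b' * ((b - a) * (b - c))
        - F b * ((b' - a') * (b - c) + (b - a) * (b' - c'))) / ((b - a) * (b - c)) ^ 2) x :=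
    hN.div hDen hD
  rw [hQ.deriv]
  -- substitute DKN for a', b', c'
  have hda : a' = F a * (p - b) / ((p - a) * (a - b)) := by
    have := hdkn (n - 1) x
    rwa [e1, e2] at this
  have hdb : b' = F b * (a - c) / ((a - b) * (b - c)) := hdkn n x
  have hdc : c' = F c * (b - q) / ((b - c) * (c - q)) := by
    have := hdkn (n + 1) x
    rwa [e3, e4] at this
  have h5 : a - p ≠ 0 := sub_ne_zero.mpr (Ne.symm hpa)
  have h6 : c - b ≠ 0 := sub_ne_zero.mpr (Ne.symm hbc)
  have hVm : F a / ((a - p) * (a - b)) = (F a / (a - b) - a') / (a - b) := by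
    rw [hda]
    field_simp
    ring
  have hVp : F c / ((c - b) * (c - q)) = (c' + F c / (c - b)) / (c - b) := by
    rw [hdc]
    field_simp
    ring
  rw [hVm, hVp, hdb, hF]
  field_simp
  ring
end

section
/- Under the same hypotheses (γ_n satisfies DKN with F₁ monic cubic, consecutive γ's distinct, V_n = F₁(γ_n)/((γ_n − γ_{n−1})(γ_n − γ_{n+1})), W_n = −c₂ − γ_n − γ_{n+1}), one has ∂_x W_n = (W_n − W_{n−1})V_n + (W_{n+1} − W_n)V_{n+1} for all n. -/
/-- DKN implies the second equation (13) of the system under the rank-two elliptic reduction. -/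
theorem stmt5 (c0 c1 c2 : ℝ) (γ : ℤ → ℝ → ℝ)
    (hsm : ∀ n, ContDiff ℝ (⊤ : ℕ∞) (γ n))
    (hdist : ∀ (n : ℤ) (x : ℝ),
      γ (n - 1) x ≠ γ n x ∧ γ n x ≠ γ (n + 1) x ∧ γ (n - 1) x ≠ γ (n + 1) x)
    (F : ℝ → ℝ) (hF : F = fun t => t ^ 3 + c2 * t ^ 2 + c1 * t + c0)
    (hdkn : ∀ (n : ℤ) (x : ℝ), deriv (γ n) x =
      F (γ n x) * (γ (n - 1) x - γ (n + 1) x) /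
        ((γ (n - 1) x - γ n x) * (γ n x - γ (n + 1) x))) :
    ∀ (n : ℤ) (x : ℝ),
      deriv (fun x' => -c2 - γ n x' - γ (n + 1) x') x
        = ((-c2 - γ n x - γ (n + 1) x) - (-c2 - γ (n - 1) x - γ n x)) *
            (F (γ n x) / ((γ n x - γ (n - 1) x) * (γ n x - γ (n + 1) x)))
          + ((-c2 - γ (n + 1) x - γ (n + 2) x) - (-c2 - γ n x - γ (n + 1) x)) *
            (F (γ (n + 1) x) / ((γ (n + 1) x - γ n x) * (γ (n + 1) x - γ (n + 2) x))) := by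
  intro n x
  have hd : ∀ m : ℤ, HasDerivAt (γ m) (deriv (γ m) x) x :=
    fun m => ((hsm m).differentiable (by simp) x).hasDerivAt
  have hL : deriv (fun x' => -c2 - γ n x' - γ (n + 1) x') x
      = -(deriv (γ n) x) - deriv (γ (n + 1)) x := by
    have h := ((hasDerivAt_const x (-c2)).sub (hd n)).sub (hd (n + 1))
    simpa using (show HasDerivAt (fun x' => -c2 - γ n x' - γ (n + 1) x') _ x from h).deriv
  rw [hL, hdkn n x, hdkn (n + 1) x]
  have e1 : n + 1 - 1 = n := by ring
  have e2 : n + 1 + 1 = n + 2 := by ring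
  rw [e1, e2]
  obtain ⟨a1, a2, a3⟩ := hdist n x
  obtain ⟨b1, b2, b3⟩ := hdist (n + 1) x
  rw [e1] at b1 b3
  rw [e2] at b2 b3
  have s1 : γ (n - 1) x - γ n x ≠ 0 := sub_ne_zero.mpr a1
  have s2 : γ n x - γ (n + 1) x ≠ 0 := sub_ne_zero.mpr a2
  have s3 : γ n x - γ (n - 1) x ≠ 0 := sub_ne_zero.mpr (Ne.symm a1)
  have s4 : γ (n + 1) x - γ n x ≠ 0 := sub_ne_zero.mpr (Ne.symm a2)
  have s5 : γ (n + 1) x - γ (n + 2) x ≠ 0 := sub_ne_zero.mpr b2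
  field_simp
  ring
end

section
/- Let γ_n(x) be 4-periodic with pairwise distinct consecutive values and satisfy DKN: γ_n' = F₁(γ_n)(γ_{n−1} − γ_{n+1})/((γ_{n−1} − γ_n)(γ_n − γ_{n+1})), with F₁(γ_n) ≠ 0. Then the product F₁(γ₀)F₁(γ₁)F₁(γ₂)F₁(γ₃)/((γ₀−γ₁)(γ₁−γ₂)(γ₂−γ₃)(γ₃−γ₀))² is constant in x. -/
/-- The quantity `V n = F(γ n)/((γ (n-1) - γ n)(γ n - γ (n+1)))`. -/
private noncomputable def Vf (F : ℝ → ℝ) (γ : ℤ → ℝ → ℝ) (n : ℤ) (y : ℝ) : ℝ :=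
  F (γ n y) / ((γ (n - 1) y - γ n y) * (γ n y - γ (n + 1) y))

set_option maxHeartbeats 2000000 in
/-- Key local conservation law: `V n' = V n * (γ (n+1) - γ (n-1) - V (n-1) + V (n+1))`. -/
private lemma Vf_hasDerivAt (c0 c1 c2 : ℝ) (γ : ℤ → ℝ → ℝ)
    (hsm : ∀ n, ContDiff ℝ (⊤ : ℕ∞) (γ n))
    (F : ℝ → ℝ) (hF : F = fun t => t ^ 3 + c2 * t ^ 2 + c1 * t + c0)
    (hper : ∀ (n : ℤ) (x : ℝ), γ (n + 4) x = γ n x)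
    (hdist : ∀ (n : ℤ) (x : ℝ),
      γ (n - 1) x ≠ γ n x ∧ γ n x ≠ γ (n + 1) x ∧ γ (n - 1) x ≠ γ (n + 1) x)
    (hdkn : ∀ (n : ℤ) (x : ℝ), deriv (γ n) x =
      F (γ n x) * (γ (n - 1) x - γ (n + 1) x) /
        ((γ (n - 1) x - γ n x) * (γ n x - γ (n + 1) x)))
    (n : ℤ) (x : ℝ) :
    HasDerivAt (Vf F γ n)
      (Vf F γ n x * (γ (n + 1) x - γ (n - 1) x - Vf F γ (n - 1) x + Vf F γ (n + 1) x)) x := by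
  have hD : ∀ m : ℤ, HasDerivAt (γ m)
      (F (γ m x) * (γ (m - 1) x - γ (m + 1) x) /
        ((γ (m - 1) x - γ m x) * (γ m x - γ (m + 1) x))) x := by
    intro m
    have h := (((hsm m).differentiable (by simp)).differentiableAt (x := x)).hasDerivAt
    rwa [hdkn m x] at h
  have hper2 : γ (n + 2) x = γ (n - 2) x := by
    have h := hper (n - 2) x
    rwa [show n - 2 + 4 = n + 2 by ring] at h
  -- derivatives of the three nodes, with normalized indices
  have ha : HasDerivAt (γ (n - 1))
      (F (γ (n - 1) x) * (γ (n - 2) x - γ n x) /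
        ((γ (n - 2) x - γ (n - 1) x) * (γ (n - 1) x - γ n x))) x := by
    have h := hD (n - 1)
    rwa [show n - 1 - 1 = n - 2 by ring, show n - 1 + 1 = n by ring] at h
  have hb : HasDerivAt (γ n)
      (F (γ n x) * (γ (n - 1) x - γ (n + 1) x) /
        ((γ (n - 1) x - γ n x) * (γ n x - γ (n + 1) x))) x := hD n
  have hc : HasDerivAt (γ (n + 1))
      (F (γ (n + 1) x) * (γ n x - γ (n - 2) x) /
        ((γ n x - γ (n + 1) x) * (γ (n + 1) x - γ (n - 2) x))) x := by
    have h := hD (n + 1)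
    rwa [show n + 1 - 1 = n by ring, show n + 1 + 1 = n + 2 by ring, hper2] at h
  -- distinctness
  have hea : γ (n - 2) x - γ (n - 1) x ≠ 0 := by
    have h := (hdist (n - 1) x).1
    rw [show n - 1 - 1 = n - 2 by ring] at h
    exact sub_ne_zero.mpr h
  have hab : γ (n - 1) x - γ n x ≠ 0 := sub_ne_zero.mpr (hdist n x).1
  have hbc : γ n x - γ (n + 1) x ≠ 0 := sub_ne_zero.mpr (hdist n x).2.1
  have hce : γ (n + 1) x - γ (n - 2) x ≠ 0 := by
    have h := (hdist (n + 2) x).1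
    rw [show n + 2 - 1 = n + 1 by ring, hper2] at h
    exact sub_ne_zero.mpr h
  -- derivative of F
  have HF : ∀ t : ℝ, HasDerivAt F (3 * t ^ 2 + 2 * c2 * t + c1) t := by
    intro t
    rw [hF]
    have h1 : HasDerivAt (fun s : ℝ => s ^ 3) (3 * t ^ 2) t := by
      simpa using hasDerivAt_pow 3 t
    have h2 : HasDerivAt (fun s : ℝ => c2 * s ^ 2) (c2 * (2 * t)) t := by
      simpa using (hasDerivAt_pow 2 t).const_mul c2
    have h3 : HasDerivAt (fun s : ℝ => c1 * s) c1 t := by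
      simpa using (hasDerivAt_id t).const_mul c1
    have h := ((h1.add h2).add h3).add_const c0
    refine h.congr_deriv ?_
    ring
  have hFb : HasDerivAt (fun y => F (γ n y))
      ((3 * (γ n x) ^ 2 + 2 * c2 * (γ n x) + c1) *
        (F (γ n x) * (γ (n - 1) x - γ (n + 1) x) /
          ((γ (n - 1) x - γ n x) * (γ n x - γ (n + 1) x)))) x := (HF _).comp x hb
  have hden : HasDerivAt (fun y => (γ (n - 1) y - γ n y) * (γ n y - γ (n + 1) y))
      ((F (γ (n - 1) x) * (γ (n - 2) x - γ n x) /
          ((γ (n - 2) x - γ (n - 1) x) * (γ (n - 1) x - γ n x))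
        - F (γ n x) * (γ (n - 1) x - γ (n + 1) x) /
          ((γ (n - 1) x - γ n x) * (γ n x - γ (n + 1) x))) * (γ n x - γ (n + 1) x)
      + (γ (n - 1) x - γ n x) *
        (F (γ n x) * (γ (n - 1) x - γ (n + 1) x) /
          ((γ (n - 1) x - γ n x) * (γ n x - γ (n + 1) x))
        - F (γ (n + 1) x) * (γ n x - γ (n - 2) x) /
          ((γ n x - γ (n + 1) x) * (γ (n + 1) x - γ (n - 2) x)))) x :=
    (ha.sub hb).mul (hb.sub hc)
  have hdne : (γ (n - 1) x - γ n x) * (γ n x - γ (n + 1) x) ≠ 0 := mul_ne_zero hab hbc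
  have H := hFb.div hden hdne
  unfold Vf
  refine H.congr_deriv ?_
  rw [show n + 1 - 1 = n by ring, show n + 1 + 1 = n + 2 by ring,
    show n - 1 - 1 = n - 2 by ring, show n - 1 + 1 = n by ring, hper2]
  subst hF
  simp only
  field_simp
  ring

set_option maxHeartbeats 1000000 in
/-- For 4-periodic DKN solutions, the quantity
`F₁(γ₀)F₁(γ₁)F₁(γ₂)F₁(γ₃)/((γ₀−γ₁)(γ₁−γ₂)(γ₂−γ₃)(γ₃−γ₀))²` is constant in `x`. -/
theorem stmt18 (c0 c1 c2 : ℝ) (γ : ℤ → ℝ → ℝ)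
    (hsm : ∀ n, ContDiff ℝ (⊤ : ℕ∞) (γ n))
    (F : ℝ → ℝ) (hF : F = fun t => t ^ 3 + c2 * t ^ 2 + c1 * t + c0)
    (hper : ∀ (n : ℤ) (x : ℝ), γ (n + 4) x = γ n x)
    (hdist : ∀ (n : ℤ) (x : ℝ),
      γ (n - 1) x ≠ γ n x ∧ γ n x ≠ γ (n + 1) x ∧ γ (n - 1) x ≠ γ (n + 1) x)
    (hFne : ∀ (n : ℤ) (x : ℝ), F (γ n x) ≠ 0)
    (hdkn : ∀ (n : ℤ) (x : ℝ), deriv (γ n) x =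
      F (γ n x) * (γ (n - 1) x - γ (n + 1) x) /
        ((γ (n - 1) x - γ n x) * (γ n x - γ (n + 1) x))) :
    ∀ x : ℝ,
      deriv (fun x' => F (γ 0 x') * F (γ 1 x') * F (γ 2 x') * F (γ 3 x') /
        ((γ 0 x' - γ 1 x') * (γ 1 x' - γ 2 x') * (γ 2 x' - γ 3 x')
          * (γ 3 x' - γ 0 x')) ^ 2) x = 0 := by
  intro x
  -- rewrite the quantity as a product of the V's
  have hfun : (fun x' => F (γ 0 x') * F (γ 1 x') * F (γ 2 x') * F (γ 3 x') /
      ((γ 0 x' - γ 1 x') * (γ 1 x' - γ 2 x') * (γ 2 x' - γ 3 x')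
        * (γ 3 x' - γ 0 x')) ^ 2)
      = fun y => Vf F γ 0 y * Vf F γ 1 y * Vf F γ 2 y * Vf F γ 3 y := by
    funext y
    have e3 : γ (-1 : ℤ) y = γ 3 y := by
      have h := hper (-1) y
      rw [show (-1 : ℤ) + 4 = 3 by ring] at h
      exact h.symm
    have e4 : γ (4 : ℤ) y = γ 0 y := by
      have h := hper 0 y
      rwa [show (0 : ℤ) + 4 = 4 by ring] at h
    simp only [Vf]
    rw [show (0 : ℤ) - 1 = -1 by ring, show (0 : ℤ) + 1 = 1 by ring,
      show (1 : ℤ) - 1 = 0 by ring, show (1 : ℤ) + 1 = 2 by ring,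
      show (2 : ℤ) - 1 = 1 by ring, show (2 : ℤ) + 1 = 3 by ring,
      show (3 : ℤ) - 1 = 2 by ring, show (3 : ℤ) + 1 = 4 by ring, e3, e4]
    rw [div_mul_div_comm, div_mul_div_comm, div_mul_div_comm]
    congr 1
    ring
  rw [hfun]
  -- periodicity of V
  have hVper : ∀ m : ℤ, Vf F γ (m + 4) x = Vf F γ m x := by
    intro m
    simp only [Vf]
    rw [hper, show m + 4 - 1 = m - 1 + 4 by ring, hper,
      show m + 4 + 1 = m + 1 + 4 by ring, hper]
  have hV3 : Vf F γ (-1 : ℤ) x = Vf F γ 3 x := by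
    have h := hVper (-1)
    rw [show (-1 : ℤ) + 4 = 3 by ring] at h
    exact h.symm
  have hV0 : Vf F γ (4 : ℤ) x = Vf F γ 0 x := by
    have h := hVper 0
    rwa [show (0 : ℤ) + 4 = 4 by ring] at h
  have e3 : γ (-1 : ℤ) x = γ 3 x := by
    have h := hper (-1) x
    rw [show (-1 : ℤ) + 4 = 3 by ring] at h
    exact h.symm
  have e4 : γ (4 : ℤ) x = γ 0 x := by
    have h := hper 0 x
    rwa [show (0 : ℤ) + 4 = 4 by ring] at h
  -- the four local laws
  have K := fun n => Vf_hasDerivAt c0 c1 c2 γ hsm F hF hper hdist hdkn n x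
  have K0 : HasDerivAt (Vf F γ 0)
      (Vf F γ 0 x * (γ 1 x - γ 3 x - Vf F γ 3 x + Vf F γ 1 x)) x := by
    have h := K 0
    rwa [show (0 : ℤ) + 1 = 1 by ring, show (0 : ℤ) - 1 = -1 by ring, e3, hV3] at h
  have K1 : HasDerivAt (Vf F γ 1)
      (Vf F γ 1 x * (γ 2 x - γ 0 x - Vf F γ 0 x + Vf F γ 2 x)) x := by
    have h := K 1
    rwa [show (1 : ℤ) + 1 = 2 by ring, show (1 : ℤ) - 1 = 0 by ring] at h
  have K2 : HasDerivAt (Vf F γ 2)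
      (Vf F γ 2 x * (γ 3 x - γ 1 x - Vf F γ 1 x + Vf F γ 3 x)) x := by
    have h := K 2
    rwa [show (2 : ℤ) + 1 = 3 by ring, show (2 : ℤ) - 1 = 1 by ring] at h
  have K3 : HasDerivAt (Vf F γ 3)
      (Vf F γ 3 x * (γ 0 x - γ 2 x - Vf F γ 2 x + Vf F γ 0 x)) x := by
    have h := K 3
    rwa [show (3 : ℤ) + 1 = 4 by ring, show (3 : ℤ) - 1 = 2 by ring, e4, hV0] at h
  have Hprod : HasDerivAt (fun y => Vf F γ 0 y * Vf F γ 1 y * Vf F γ 2 y * Vf F γ 3 y)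
      _ x := ((K0.mul K1).mul K2).mul K3
  rw [Hprod.deriv]
  simp only [Pi.mul_apply]
  ring
end
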